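/- Let α ≤ β be infinite cardinals. Every Banach space of (α, β)-universal disposition is (α, β)₁-injective. -/

import Mathlib

/-- A bundled Banach space over `ℝ`. -/
structure BanachSpace : Type (u + 1) where
  carrier : Type u
  [norm : NormedAddCommGroup carrier]
  [space : NormedSpace ℝ carrier]
  [complete : CompleteSpace carrier]

attribute [instance] BanachSpace.norm BanachSpace.space BanachSpace.complete

instance : CoeSort BanachSpace.{u} (Type u) := ⟨BanachSpace.carrier⟩

/-- A topological space has density character `< κ`: there is a dense subset of
cardinality `< κ`. -/
def DensityLT (X : Type u) [TopologicalSpace X] (κ : Cardinal.{u}) : Prop :=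
  ∃ s : Set X, Dense s ∧ Cardinal.mk s < κ

/-- `E` is `(α, β)₁`-injective: for every Banach space `B` with density character `< β` and
every closed subspace `A ⊆ B` of density character `< α`, every operator `t : A → E`
extends to `T : B → E` with `‖T‖ ≤ ‖t‖`. -/
def IsABInjective1 (α β : Cardinal.{u}) (E : BanachSpace.{u}) : Prop :=
  ∀ B : BanachSpace.{u}, DensityLT B.carrier β →
    ∀ A : Submodule ℝ B.carrier, IsClosed (A : Set B.carrier) → DensityLT A α →
      ∀ t : A →L[ℝ] E.carrier, ∃ T : B.carrier →L[ℝ] E.carrier,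
        (∀ a : A, T (a : B.carrier) = t a) ∧ ‖T‖ ≤ ‖t‖

/-- `U` is of `(α, β)`-universal disposition: given Banach spaces `A` of density character
`< α` and `B` of density character `< β` and isometric embeddings `u : A → U`, `i : A → B`,
there is an isometric embedding `u' : B → U` with `u' ∘ i = u`. -/
def IsABUnivDisp (α β : Cardinal.{u}) (U : BanachSpace.{u}) : Prop :=
  ∀ A B : BanachSpace.{u}, DensityLT A.carrier α → DensityLT B.carrier β →
    ∀ (u : A.carrier →ₗᵢ[ℝ] U.carrier) (i : A.carrier →ₗᵢ[ℝ] B.carrier),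
      ∃ u' : B.carrier →ₗᵢ[ℝ] U.carrier, ∀ a : A.carrier, u' (i a) = u a

/-!
Scaling reduces the theorem to operators `t : A → U` of norm at most `1`. Such a `t` takes values
in the closure `C` of its range, whose density character is `< α`. In the pushout
`P = (B ⊕₁ C) / {(a, -t a) | a ∈ A}` the inclusion `B → P` is a contraction, and `C → P` is an
isometry because `‖a‖ + ‖c - t a‖ ≥ ‖t a‖ + ‖c - t a‖ ≥ ‖c‖`; moreover `P` is a continuous image of
`B × C`, so its density character is `< β`. Universal disposition extends the inclusion `C ⊆ U`
to an isometric embedding `P → U`, and its composite with `B → P` is the required extension.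
-/

universe u

open Cardinal

section DensityLT

variable {X Y : Type u} [TopologicalSpace X] [TopologicalSpace Y] {κ κ' : Cardinal.{u}}

theorem DensityLT.mono (h : DensityLT X κ) (hκ : κ ≤ κ') : DensityLT X κ' :=
  let ⟨s, hs, hcard⟩ := h
  ⟨s, hs, hcard.trans_le hκ⟩

theorem DensityLT.of_denseRange (h : DensityLT X κ) {f : X → Y} (hf : DenseRange f)
    (hc : Continuous f) : DensityLT Y κ :=
  let ⟨s, hs, hcard⟩ := h
  ⟨f '' s, hf.dense_image hc hs, mk_image_le.trans_lt hcard⟩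

theorem DensityLT.prod (hX : DensityLT X κ) (hY : DensityLT Y κ) (hκ : ℵ₀ ≤ κ) :
    DensityLT (X × Y) κ := by
  obtain ⟨s, hs, hs_card⟩ := hX
  obtain ⟨r, hr, hr_card⟩ := hY
  refine ⟨s ×ˢ r, hs.prod hr, ?_⟩
  rw [mk_congr (Equiv.Set.prod s r), mk_prod, lift_id, lift_id]
  exact mul_lt_of_lt hκ hs_card hr_card

end DensityLT

theorem ContinuousLinearMap.denseRange_codRestrict_topologicalClosure {R M N : Type*} [Semiring R]
    [TopologicalSpace M] [AddCommMonoid M] [Module R M] [TopologicalSpace N] [AddCommMonoid N]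
    [Module R N] [ContinuousAdd N] [ContinuousConstSMul R N] (t : M →L[R] N) :
    DenseRange (t.codRestrict (t : M →ₗ[R] N).range.topologicalClosure
      fun x => Submodule.le_topologicalClosure _ (LinearMap.mem_range_self (t : M →ₗ[R] N) x)) := by
  rw [DenseRange, Subtype.dense_iff, ← Set.range_comp]
  exact (Submodule.topologicalClosure_coe _).subset

theorem exists_extension_norm_le_of_forall_norm_le_one {𝕜 B E : Type*} [RCLike 𝕜]
    [NormedAddCommGroup B] [NormedSpace 𝕜 B] [NormedAddCommGroup E] [NormedSpace 𝕜 E]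
    {A : Submodule 𝕜 B}
    (h : ∀ t : A →L[𝕜] E, ‖t‖ ≤ 1 → ∃ T : B →L[𝕜] E, (∀ a : A, T a = t a) ∧ ‖T‖ ≤ 1)
    (t : A →L[𝕜] E) : ∃ T : B →L[𝕜] E, (∀ a : A, T a = t a) ∧ ‖T‖ ≤ ‖t‖ := by
  rcases eq_or_ne t 0 with rfl | ht
  · exact ⟨0, fun _ => rfl, by simp⟩
  have ht_pos : 0 < ‖t‖ := norm_pos_iff.2 ht
  obtain ⟨T, hT, hT_norm⟩ := h ((‖t‖⁻¹ : 𝕜) • t) <| by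
    rw [norm_smul, norm_inv, RCLike.norm_ofReal, abs_norm, inv_mul_cancel₀ ht_pos.ne']
  refine ⟨(‖t‖ : 𝕜) • T, fun a => ?_, ?_⟩
  · rw [smul_apply, hT, smul_apply, smul_inv_smul₀]
    exact_mod_cast ht_pos.ne'
  · rw [norm_smul, RCLike.norm_ofReal, abs_norm]
    exact mul_le_of_le_one_right ht_pos.le hT_norm

section L1Pushout

variable {𝕜 B C : Type*} [NontriviallyNormedField 𝕜] [NormedAddCommGroup B] [NormedSpace 𝕜 B]
  [NormedAddCommGroup C] [NormedSpace 𝕜 C] (A : Submodule 𝕜 B) (t : A →L[𝕜] C)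

open WithLp

def pushoutGraph : A →L[𝕜] WithLp 1 (B × C) :=
  (prodContinuousLinearEquiv 1 𝕜 B C).symm.toContinuousLinearMap ∘L (A.subtypeL.prod (-t))

theorem norm_pushoutGraph (a : A) : ‖pushoutGraph A t a‖ = ‖a‖ + ‖t a‖ := by
  simp [pushoutGraph, prod_norm_eq_of_L1]

def pushoutKernel : Submodule 𝕜 (WithLp 1 (B × C)) :=
  LinearMap.range (pushoutGraph A t : A →ₗ[𝕜] WithLp 1 (B × C))

theorem isClosed_pushoutKernel [CompleteSpace A] :
    IsClosed (pushoutKernel A t : Set (WithLp 1 (B × C))) := by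
  have : AntilipschitzWith 1 (pushoutGraph A t) :=
    AddMonoidHomClass.antilipschitz_of_bound _ fun a => by
      simp only [norm_pushoutGraph, NNReal.coe_one, one_mul]
      exact le_add_of_nonneg_right (norm_nonneg _)
  rw [pushoutKernel, LinearMap.coe_range]
  exact this.isClosed_range (pushoutGraph A t).uniformContinuous

abbrev Pushout : Type _ := WithLp 1 (B × C) ⧸ pushoutKernel A t

namespace Pushout

def mk : B × C →L[𝕜] Pushout A t :=
  (pushoutKernel A t).mkQL ∘L (prodContinuousLinearEquiv 1 𝕜 B C).symm.toContinuousLinearMap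

theorem mk_surjective : Function.Surjective (mk A t) :=
  (Submodule.mkQ_surjective _).comp (prodContinuousLinearEquiv 1 𝕜 B C).symm.surjective

theorem mk_graph_eq_zero (a : A) : mk A t ((a : B), -t a) = 0 :=
  (Submodule.Quotient.mk_eq_zero _).2 (LinearMap.mem_range_self _ a)

theorem norm_mk_le (x : B × C) : ‖mk A t x‖ ≤ ‖x.1‖ + ‖x.2‖ :=
  (Submodule.Quotient.norm_mk_le _ _).trans_eq (prod_norm_eq_of_L1 _)

def inl : B →L[𝕜] Pushout A t := mk A t ∘L ContinuousLinearMap.inl 𝕜 B C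

def inr : C →L[𝕜] Pushout A t := mk A t ∘L ContinuousLinearMap.inr 𝕜 B C

theorem inl_coe (a : A) : inl A t a = inr A t (t a) := by
  rw [← sub_eq_zero, inl, inr, ContinuousLinearMap.comp_apply, ContinuousLinearMap.comp_apply,
    ← map_sub, ContinuousLinearMap.inl_apply, ContinuousLinearMap.inr_apply, Prod.mk_sub_mk,
    sub_zero, zero_sub]
  exact mk_graph_eq_zero A t a

theorem opNorm_inl_le : ‖inl A t‖ ≤ 1 :=
  ContinuousLinearMap.opNorm_le_bound _ zero_le_one fun b =>
    (norm_mk_le A t (b, 0)).trans_eq (by simp)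

theorem norm_inr (ht : ‖t‖ ≤ 1) (c : C) : ‖inr A t c‖ = ‖c‖ := by
  refine le_antisymm ((norm_mk_le A t (0, c)).trans_eq (by simp)) ?_
  refine QuotientAddGroup.le_norm_iff.2 fun m hm => ?_
  obtain ⟨a, ha⟩ : m - toLp 1 ((0 : B), c) ∈ pushoutKernel A t := (Submodule.Quotient.eq _).1 hm
  obtain rfl : m = pushoutGraph A t a + toLp 1 (0, c) := eq_add_of_sub_eq ha.symm
  calc ‖c‖ ≤ ‖t a‖ + ‖c - t a‖ := norm_le_insert' c (t a)
    _ ≤ ‖a‖ + ‖c - t a‖ := by gcongr; exact t.le_of_opNorm_le ht a |>.trans_eq (one_mul _)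
    _ = ‖pushoutGraph A t a + toLp 1 (0, c)‖ := by
      simp [pushoutGraph, prod_norm_eq_of_L1, neg_add_eq_sub]

end Pushout

end L1Pushout

theorem IsABUnivDisp.exists_extension_of_norm_le_one {α β : Cardinal.{u}} {U : BanachSpace.{u}}
    (hU : IsABUnivDisp α β U) (hβ : ℵ₀ ≤ β) (hαβ : α ≤ β) {B : BanachSpace.{u}}
    (hB : DensityLT B.carrier β) {A : Submodule ℝ B.carrier} (hAc : IsClosed (A : Set B.carrier))
    (hA : DensityLT A α) (t : A →L[ℝ] U.carrier) (ht : ‖t‖ ≤ 1) :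
    ∃ T : B.carrier →L[ℝ] U.carrier, (∀ a : A, T a = t a) ∧ ‖T‖ ≤ 1 := by
  have : CompleteSpace A := hAc.completeSpace_coe
  set C := (t : A →ₗ[ℝ] U.carrier).range.topologicalClosure
  have : CompleteSpace C := Submodule.isClosed_topologicalClosure _ |>.completeSpace_coe
  let tC : A →L[ℝ] C :=
    t.codRestrict C fun a => Submodule.le_topologicalClosure _ (LinearMap.mem_range_self _ a)
  have htC : ‖tC‖ ≤ 1 := by rwa [← C.subtypeₗᵢ.norm_toContinuousLinearMap_comp]
  have hC : DensityLT C α := hA.of_denseRange t.denseRange_codRestrict_topologicalClosure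
    tC.continuous
  have : IsClosed (pushoutKernel A tC : Set (WithLp 1 (B.carrier × C))) :=
    isClosed_pushoutKernel A tC
  have hP : DensityLT (Pushout A tC) β := (hB.prod (hC.mono hαβ) hβ).of_denseRange
    (Pushout.mk_surjective A tC).denseRange (Pushout.mk A tC).continuous
  obtain ⟨w, hw⟩ := hU ⟨C⟩ ⟨Pushout A tC⟩ hC hP C.subtypeₗᵢ
    { toLinearMap := Pushout.inr A tC, norm_map' := Pushout.norm_inr A tC htC }
  refine ⟨w.toContinuousLinearMap ∘L Pushout.inl A tC, fun a => ?_, ?_⟩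
  · exact (congrArg w (Pushout.inl_coe A tC a)).trans (hw (tC a))
  · rw [w.norm_toContinuousLinearMap_comp]
    exact Pushout.opNorm_inl_le A tC

/-- For infinite cardinals `α ≤ β`, every Banach space of `(α, β)`-universal disposition is
`(α, β)₁`-injective. -/
theorem abUnivDisp_isABInjective1
    (α β : Cardinal.{u}) (hα : Cardinal.aleph0 ≤ α) (hαβ : α ≤ β)
    (U : BanachSpace.{u}) (hU : IsABUnivDisp α β U) :
    IsABInjective1 α β U := fun _ hB _ hAc hA =>
  exists_extension_norm_le_of_forall_norm_le_one
    (hU.exists_extension_of_norm_le_one (hα.trans hαβ) hαβ hB hAc hA)
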